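/- Let m be a positive integer, y_1,...,y_m ∈ {0,1} with ∑_k y_k ≤ 1, z ∈ {0,1}, and x a real number. If -∑_k k·y_k ≤ x ≤ ∑_k k·y_k, ∑_k k·y_k - x ≤ 2mz, and ∑_k k·y_k + x ≤ 2m(1-z), then x is an integer with -m ≤ x ≤ m, either x = ∑_k k·y_k or x = -∑_k k·y_k, and x² = ∑_k k²·y_k. -/

import Mathlib

/-! Since the `y k` are `0/1` with `∑ y k ≤ 1`, at most one of them is `1`, so `∑ k y k = j` and
`∑ k² y k = j²` for some `0 ≤ j ≤ m`. The binary `z` then selects which of the two big-M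
constraints is tight: `z = 0` forces `x = j`, and `z = 1` forces `x = -j`. -/

open Finset

theorem Finset.sum_mul_eq_zero_or_exists_eq_apply {ι R : Type*} [DecidableEq ι] [Semiring R]
    [PartialOrder R] [IsStrictOrderedRing R] {s : Finset ι} {y : ι → R}
    (hy : ∀ k ∈ s, y k = 0 ∨ y k = 1) (hsum : ∑ k ∈ s, y k ≤ 1) :
    (∀ f : ι → R, ∑ k ∈ s, f k * y k = 0) ∨ ∃ j ∈ s, ∀ f : ι → R, ∑ k ∈ s, f k * y k = f j := by
  by_cases hzero : ∀ k ∈ s, y k = 0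
  · exact .inl fun f => sum_eq_zero fun k hk => by rw [hzero k hk, mul_zero]
  push Not at hzero
  obtain ⟨j, hj, hyj_ne⟩ := hzero
  have hyj : y j = 1 := (hy j hj).resolve_left hyj_ne
  have hrest : ∀ k ∈ s, k ≠ j → y k = 0 := by
    intro k hk hkj
    refine (hy k hk).resolve_right fun hyk => ?_
    have hnonneg : ∀ i ∈ s, 0 ≤ y i := fun i hi => by rcases hy i hi with h | h <;> simp [h]
    have := add_le_sum hnonneg hj hk hkj.symm
    rw [hyj, hyk] at this
    exact zero_lt_one.not_ge (by simpa using this.trans hsum)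
  refine .inr ⟨j, hj, fun f => ?_⟩
  rw [sum_eq_single_of_mem j hj fun k hk hkj => by rw [hrest k hk hkj, mul_zero], hyj, mul_one]

theorem eq_or_eq_neg_of_le_mul_of_le_mul_one_sub {R : Type*} [Ring R] [PartialOrder R] [IsOrderedRing R]
    {s x z M : R} (hz : z = 0 ∨ z = 1) (h1 : -s ≤ x) (h2 : x ≤ s) (h3 : s - x ≤ M * z)
    (h4 : s + x ≤ M * (1 - z)) : x = s ∨ x = -s := by
  rcases hz with rfl | rfl
  · exact .inl (le_antisymm h2 (sub_nonpos.mp (by simpa using h3)))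
  · exact .inr (le_antisymm (le_neg_iff_add_nonpos_left.mpr (by simpa using h4)) h1)

theorem stmt4_general (m : ℕ) (y : ℕ → ℝ) (z x : ℝ)
    (hy : ∀ k ∈ Finset.Icc 1 m, y k = 0 ∨ y k = 1)
    (hysum : (∑ k ∈ Finset.Icc 1 m, y k) ≤ 1)
    (hz : z = 0 ∨ z = 1)
    (h1 : -(∑ k ∈ Finset.Icc 1 m, (k : ℝ) * y k) ≤ x)
    (h2 : x ≤ ∑ k ∈ Finset.Icc 1 m, (k : ℝ) * y k)
    (h3 : (∑ k ∈ Finset.Icc 1 m, (k : ℝ) * y k) - x ≤ 2 * m * z)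
    (h4 : (∑ k ∈ Finset.Icc 1 m, (k : ℝ) * y k) + x ≤ 2 * m * (1 - z)) :
    (∃ t : ℤ, x = (t : ℝ)) ∧ -(m : ℝ) ≤ x ∧ x ≤ (m : ℝ) ∧
    (x = ∑ k ∈ Finset.Icc 1 m, (k : ℝ) * y k ∨
      x = -(∑ k ∈ Finset.Icc 1 m, (k : ℝ) * y k)) ∧
    x ^ 2 = ∑ k ∈ Finset.Icc 1 m, (k : ℝ) ^ 2 * y k := by
  obtain ⟨j, hjm, hS, hQ⟩ : ∃ j : ℕ, j ≤ m ∧ ∑ k ∈ Icc 1 m, (k : ℝ) * y k = j ∧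
      ∑ k ∈ Icc 1 m, (k : ℝ) ^ 2 * y k = (j : ℝ) ^ 2 := by
    rcases sum_mul_eq_zero_or_exists_eq_apply hy hysum with hzero | ⟨j, hj, hweighted⟩
    · exact ⟨0, m.zero_le, by simp [hzero], by simp [hzero]⟩
    · exact ⟨j, (mem_Icc.mp hj).2, hweighted fun k => (k : ℝ), hweighted fun k => (k : ℝ) ^ 2⟩
  have hjm : (j : ℝ) ≤ m := Nat.cast_le.mpr hjm
  rw [hS] at h1 h2 h3 h4 ⊢
  rw [hQ]
  rcases eq_or_eq_neg_of_le_mul_of_le_mul_one_sub hz h1 h2 h3 h4 with rfl | rfl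
  · exact ⟨⟨j, rfl⟩, by linarith [j.cast_nonneg (α := ℝ)], hjm, .inl rfl, rfl⟩
  · exact ⟨⟨-j, by push_cast; rfl⟩, neg_le_neg hjm, by linarith [j.cast_nonneg (α := ℝ)],
      .inr rfl, neg_sq _⟩

/-- Let `m` be a positive integer, `y_1, ..., y_m ∈ {0,1}` with `∑ y_k ≤ 1`, `z ∈ {0,1}`,
and `x` real. If `-∑ k·y_k ≤ x ≤ ∑ k·y_k`, `∑ k·y_k - x ≤ 2mz` and `∑ k·y_k + x ≤ 2m(1-z)`,
then `x` is an integer with `-m ≤ x ≤ m`, `x = ±∑ k·y_k`, and `x² = ∑ k²·y_k`. -/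
theorem stmt4 (m : ℕ) (hm : 0 < m) (y : ℕ → ℝ) (z x : ℝ)
    (hy : ∀ k ∈ Finset.Icc 1 m, y k = 0 ∨ y k = 1)
    (hysum : (∑ k ∈ Finset.Icc 1 m, y k) ≤ 1)
    (hz : z = 0 ∨ z = 1)
    (h1 : -(∑ k ∈ Finset.Icc 1 m, (k : ℝ) * y k) ≤ x)
    (h2 : x ≤ ∑ k ∈ Finset.Icc 1 m, (k : ℝ) * y k)
    (h3 : (∑ k ∈ Finset.Icc 1 m, (k : ℝ) * y k) - x ≤ 2 * m * z)
    (h4 : (∑ k ∈ Finset.Icc 1 m, (k : ℝ) * y k) + x ≤ 2 * m * (1 - z)) :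
    (∃ t : ℤ, x = (t : ℝ)) ∧ -(m : ℝ) ≤ x ∧ x ≤ (m : ℝ) ∧
    (x = ∑ k ∈ Finset.Icc 1 m, (k : ℝ) * y k ∨
      x = -(∑ k ∈ Finset.Icc 1 m, (k : ℝ) * y k)) ∧
    x ^ 2 = ∑ k ∈ Finset.Icc 1 m, (k : ℝ) ^ 2 * y k :=
  stmt4_general m y z x hy hysum hz h1 h2 h3 h4
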